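/- For ν > 0, s > 0, β₀ > 0, letting β̂ = (β₀ + √(β₀² + 4νs²))/2, the maximum value satisfies (νs² + β̂²)/(νs² + (β̂ − β₀)²) ≤ (β₀² + β₀√(β₀² + 4νs²) + 4νs²)/(2νs²). -/
import Mathlib

/-- For `ν > 0`, `s > 0`, `β₀ > 0`, with `β̂ = (β₀ + √(β₀² + 4νs²))/2`, the maximum value
satisfies `(νs² + β̂²)/(νs² + (β̂ − β₀)²) ≤ (β₀² + β₀√(β₀² + 4νs²) + 4νs²)/(2νs²)`. -/
theorem studentT_ratio_max_bound (ν s β₀ : ℝ) (hν : 0 < ν) (hs : 0 < s) (hβ₀ : 0 < β₀) :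
    (ν * s ^ 2 + ((β₀ + Real.sqrt (β₀ ^ 2 + 4 * ν * s ^ 2)) / 2) ^ 2) /
        (ν * s ^ 2 + ((β₀ + Real.sqrt (β₀ ^ 2 + 4 * ν * s ^ 2)) / 2 - β₀) ^ 2) ≤
      (β₀ ^ 2 + β₀ * Real.sqrt (β₀ ^ 2 + 4 * ν * s ^ 2) + 4 * ν * s ^ 2) / (2 * ν * s ^ 2) := by
  have ht : 0 < ν * s ^ 2 := by positivity
  set r := Real.sqrt (β₀ ^ 2 + 4 * ν * s ^ 2) with hr
  have hr2 : r ^ 2 = β₀ ^ 2 + 4 * ν * s ^ 2 := Real.sq_sqrt (by positivity)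
  have hr0 : 0 ≤ r := Real.sqrt_nonneg _
  have hkey : β₀ * r ≤ β₀ ^ 2 + 2 * ν * s ^ 2 := by
    have h1 : r ≤ β₀ + 2 * ν * s ^ 2 / β₀ := by
      rw [hr, show β₀ + 2 * ν * s ^ 2 / β₀ = Real.sqrt ((β₀ + 2 * ν * s ^ 2 / β₀) ^ 2) from
        (Real.sqrt_sq (by positivity)).symm]
      apply Real.sqrt_le_sqrt
      have : (β₀ + 2 * ν * s ^ 2 / β₀) ^ 2 = β₀ ^ 2 + 4 * ν * s ^ 2 + (2 * ν * s ^ 2 / β₀) ^ 2 := by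
        field_simp; ring
      nlinarith [sq_nonneg (2 * ν * s ^ 2 / β₀)]
    nlinarith
  have hden : 0 < ν * s ^ 2 + ((β₀ + r) / 2 - β₀) ^ 2 := by positivity
  rw [div_le_div_iff₀ hden (by positivity)]
  nlinarith [sq_nonneg (r - β₀), mul_pos ht ht, sq_nonneg r]
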